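/- arXiv:math/0703048 — 3 statements merged into one kernel-verified Lean document; each statement's English description precedes it below -/
import Mathlib

section
/- For fixed m ∈ ℝ, among all intersection points of the line y = m x with circles C_α (α ∈ [-1,1]), the maximum value of |x| is 1/√(m² + 1/2), attained at α = 1/(2√(m² + 1/2)). -/
/-- Among all intersection points of the line y = m x with circles C_α (α ∈ [-1,1]),
the maximum of |x| is 1/√(m² + 1/2), attained at α = 1/(2√(m² + 1/2)). -/
theorem stmt_9 (m : ℝ) :
    (∀ α x : ℝ, -1 ≤ α → α ≤ 1 → (x - α) ^ 2 + (m * x) ^ 2 = 1 - α ^ 2 →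
      |x| ≤ 1 / Real.sqrt (m ^ 2 + 1 / 2)) ∧
    (∃ x : ℝ, (x - 1 / (2 * Real.sqrt (m ^ 2 + 1 / 2))) ^ 2 + (m * x) ^ 2 =
        1 - (1 / (2 * Real.sqrt (m ^ 2 + 1 / 2))) ^ 2 ∧
      |x| = 1 / Real.sqrt (m ^ 2 + 1 / 2)) := by
  have hpos : (0:ℝ) < m ^ 2 + 1 / 2 := by positivity
  set s := Real.sqrt (m ^ 2 + 1 / 2) with hsdef
  have hs0 : 0 < s := Real.sqrt_pos.mpr hpos
  have hs : s ^ 2 = m ^ 2 + 1 / 2 := Real.sq_sqrt hpos.le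
  constructor
  · intro α x _ _ h
    have hx2 : x ^ 2 ≤ (1 / s) ^ 2 := by
      rw [div_pow, one_pow, le_div_iff₀ (by positivity)]
      nlinarith [sq_nonneg (2 * α - x)]
    calc |x| = Real.sqrt (x ^ 2) := (Real.sqrt_sq_eq_abs x).symm
      _ ≤ Real.sqrt ((1 / s) ^ 2) := Real.sqrt_le_sqrt hx2
      _ = 1 / s := Real.sqrt_sq (by positivity)
  · refine ⟨1 / s, ?_, abs_of_pos (by positivity)⟩
    have hne : s ≠ 0 := hs0.ne'
    field_simp
    have h4 : s ^ 4 = (m ^ 2 + 1 / 2) ^ 2 := by rw [show s^4 = (s^2)^2 by ring, hs]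
    have h6 : s ^ 6 = (m ^ 2 + 1 / 2) ^ 3 := by rw [show s^6 = (s^2)^3 by ring, hs]
    nlinarith [hs, h4, h6]
end

section
/- Every point of every ellipse E_α = {(x,y) : 2(x-α)² + y² = 1 - 2α²} (with 2α² ≤ 1) lies in the closed unit disk x² + y² ≤ 1, and every point of the unit circle x² + y² = 1 lies on E_{x/2}. -/
/-- Every point of every ellipse E_α (2α² ≤ 1) lies in the closed unit disk, and every
point of the unit circle lies on E_{x/2}. -/
theorem stmt_13 :
    (∀ α x y : ℝ, 2 * α ^ 2 ≤ 1 → 2 * (x - α) ^ 2 + y ^ 2 = 1 - 2 * α ^ 2 →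
      x ^ 2 + y ^ 2 ≤ 1) ∧
    (∀ x y : ℝ, x ^ 2 + y ^ 2 = 1 →
      2 * (x - x / 2) ^ 2 + y ^ 2 = 1 - 2 * (x / 2) ^ 2) := by
  constructor
  · intro α x y h1 h2
    nlinarith [sq_nonneg (x - 2 * α)]
  · intro x y h
    nlinarith [h]
end

section
/- For α with |α| < √2/2 and x_b = 2α, the ellipse x²/2 + y² = 1 and the circle C_α are tangent at (x_b, √(1 - 2α²)): both curves pass through this point and have the same tangent line there. -/
/-- For |α| < √2/2 and x_b = 2α, the ellipse x²/2 + y² = 1 and the circle C_α are tangent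
at (x_b, √(1 - 2α²)): both curves pass through the point and the gradients of
f(x,y) = x²/2 + y² - 1 and g(x,y) = (x-α)² + y² - (1-α²) there are parallel. -/
theorem stmt_15 (α : ℝ) (hα : |α| < Real.sqrt 2 / 2) (xb : ℝ) (hxb : xb = 2 * α) :
    xb ^ 2 / 2 + Real.sqrt (1 - 2 * α ^ 2) ^ 2 = 1 ∧
    (xb - α) ^ 2 + Real.sqrt (1 - 2 * α ^ 2) ^ 2 = 1 - α ^ 2 ∧
    xb * (2 * Real.sqrt (1 - 2 * α ^ 2)) -
      (2 * (xb - α)) * (2 * Real.sqrt (1 - 2 * α ^ 2)) = 0 := by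
  have h2 : (0:ℝ) ≤ 2 := by norm_num
  have hs : α ^ 2 < 1 / 2 := by
    have := sq_lt_sq' (neg_lt_of_abs_lt hα) (lt_of_abs_lt hα)
    calc α ^ 2 < (Real.sqrt 2 / 2) ^ 2 := this
      _ = 1 / 2 := by rw [div_pow, Real.sq_sqrt h2]; norm_num
  have hnn : (0:ℝ) ≤ 1 - 2 * α ^ 2 := by linarith
  rw [Real.sq_sqrt hnn]
  refine ⟨by rw [hxb]; ring, by rw [hxb]; ring, by rw [hxb]; ring⟩
end
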